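/- Let V : ℝ^d → ℝ be differentiable with ∇V Lipschitz with Lipschitz constant L > 0, and let Φ^t be the Hamiltonian flow of h(q,p) = |p|²/2 + V(q) on ℝ^{2d}, i.e. the solution map of the ODE (q̇, ṗ) = (p, −∇V(q)) with Φ^0 = id. Let ħ > 0, let f : ℝ^{2d} → ℝ be 1-Lipschitz, and let w ∈ L¹(ℝ^{2d}). Then, with e^{ħΔ/4} denoting Gaussian regularization on ℝ^{2d} (convolution with (πħ)^{−d} e^{−|z|²/ħ}), for every t ∈ ℝ one has | ∫_{ℝ^{2d}} ( e^{ħΔ/4}(f ∘ Φ^t) − f ∘ Φ^t )(z) · w(z) dz | ≤ √(dħ) · e^{(1+L)|t|} · ‖w‖_{L¹(ℝ^{2d})}. -/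

import Mathlib

/-!
Writing `e^{ħΔ/4} g (z)` as the average of `g (z + u)` against the normalized Gaussian of
variance `ħ/2` per coordinate, a `K`-Lipschitz `g` moves by at most `K · E|u| ≤ K · √(E|u|²)`,
and `E|u|² = nħ/2` on `ℝⁿ` (differentiate `∫ e^{-b|u|²} = (π/b)^{n/2}` in `b`). For
`g = f ∘ Φ^t`, Grönwall bounds the Lipschitz constant of `Φ^t` by `e^{(1+L)|t|}`, the
Hamiltonian vector field being `max 1 L`-Lipschitz; the uniform bound `√(dħ) e^{(1+L)|t|}` on
`e^{ħΔ/4} g - g` is then paired with `w ∈ L¹`.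
-/

open MeasureTheory
open scoped NNReal

noncomputable section

/-- The phase space `ℝ^d × ℝ^d ≅ ℝ^{2d}`, equipped with the Euclidean (`ℓ²`) norm. -/
abbrev PhaseSpace (d : ℕ) := WithLp 2 (EuclideanSpace ℝ (Fin d) × EuclideanSpace ℝ (Fin d))

instance (d : ℕ) : MeasurableSpace (PhaseSpace d) := borel _
instance (d : ℕ) : BorelSpace (PhaseSpace d) := ⟨rfl⟩

/-- The position component `q` of a phase-space point `z = (q,p)`. -/
def posPart {d : ℕ} (z : PhaseSpace d) : EuclideanSpace ℝ (Fin d) :=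
  (WithLp.equiv 2 (EuclideanSpace ℝ (Fin d) × EuclideanSpace ℝ (Fin d)) z).1

/-- The momentum component `p` of a phase-space point `z = (q,p)`. -/
def momPart {d : ℕ} (z : PhaseSpace d) : EuclideanSpace ℝ (Fin d) :=
  (WithLp.equiv 2 (EuclideanSpace ℝ (Fin d) × EuclideanSpace ℝ (Fin d)) z).2

/-- Build a phase-space point from its position and momentum components. -/
def mkPhase {d : ℕ} (q p : EuclideanSpace ℝ (Fin d)) : PhaseSpace d :=
  (WithLp.equiv 2 (EuclideanSpace ℝ (Fin d) × EuclideanSpace ℝ (Fin d))).symm (q, p)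

set_option maxHeartbeats 4000000
set_option synthInstance.maxHeartbeats 400000

open Real Module

section GaussianMoments

variable {E : Type*} [NormedAddCommGroup E] [InnerProductSpace ℝ E] [FiniteDimensional ℝ E]
  [MeasurableSpace E] [BorelSpace E]

lemma integrable_exp_neg_mul_sq_norm {b : ℝ} (hb : 0 < b) :
    Integrable (fun v : E => rexp (-b * ‖v‖ ^ 2)) := by
  refine (GaussianFourier.integrable_cexp_neg_mul_sq_norm_add (V := E) (b := b)
    (by simpa using hb) 0 0).norm.congr (.of_forall fun v => ?_)
  simp [← Complex.ofReal_pow, ← Complex.ofReal_mul, ← Complex.ofReal_neg, Complex.norm_exp_ofReal]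

lemma sq_mul_exp_neg_mul_sq_le {b : ℝ} (hb : 0 < b) (x : ℝ) :
    x ^ 2 * rexp (-b * x ^ 2) ≤ b⁻¹ * rexp (-(b / 2) * x ^ 2) := by
  have h : b * x ^ 2 ≤ rexp (b / 2 * x ^ 2) :=
    calc b * x ^ 2 = 2 * (b / 2 * x ^ 2) := by ring
      _ ≤ _ := two_mul_le_exp
  calc x ^ 2 * rexp (-b * x ^ 2) = b⁻¹ * (b * x ^ 2) * rexp (-b * x ^ 2) := by
        field_simp
    _ ≤ b⁻¹ * rexp (b / 2 * x ^ 2) * rexp (-b * x ^ 2) := by gcongr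
    _ = b⁻¹ * rexp (-(b / 2) * x ^ 2) := by rw [mul_assoc, ← Real.exp_add]; ring_nf

lemma integrable_sq_norm_mul_exp_neg_mul_sq_norm {b : ℝ} (hb : 0 < b) :
    Integrable (fun v : E => ‖v‖ ^ 2 * rexp (-b * ‖v‖ ^ 2)) :=
  ((integrable_exp_neg_mul_sq_norm (half_pos hb)).const_mul b⁻¹).mono'
    (by fun_prop) (.of_forall fun v => by
      rw [norm_of_nonneg (by positivity)]
      exact sq_mul_exp_neg_mul_sq_le hb ‖v‖)

lemma integrable_norm_mul_exp_neg_mul_sq_norm {b : ℝ} (hb : 0 < b) :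
    Integrable (fun v : E => ‖v‖ * rexp (-b * ‖v‖ ^ 2)) := by
  refine ((integrable_exp_neg_mul_sq_norm hb).add
    (integrable_sq_norm_mul_exp_neg_mul_sq_norm hb)).mono' (by fun_prop)
    (.of_forall fun v => ?_)
  rw [Pi.add_apply, norm_of_nonneg (by positivity), ← one_add_mul]
  gcongr
  nlinarith [sq_nonneg (‖v‖ - 1)]

lemma hasDerivAt_integral_exp_neg_mul_sq_norm {b : ℝ} (hb : 0 < b) :
    HasDerivAt (fun s : ℝ => ∫ v : E, rexp (-s * ‖v‖ ^ 2))
      (-∫ v : E, ‖v‖ ^ 2 * rexp (-b * ‖v‖ ^ 2)) b := by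
  rw [← integral_neg]
  refine (hasDerivAt_integral_of_dominated_loc_of_deriv_le
    (F := fun (s : ℝ) (v : E) => rexp (-s * ‖v‖ ^ 2))
    (F' := fun (s : ℝ) (v : E) => -(‖v‖ ^ 2 * rexp (-s * ‖v‖ ^ 2)))
    (bound := fun v : E => ‖v‖ ^ 2 * rexp (-(b / 2) * ‖v‖ ^ 2))
    (Metric.ball_mem_nhds b (half_pos hb)) (.of_forall fun s => by fun_prop)
    (integrable_exp_neg_mul_sq_norm hb) (by fun_prop) (.of_forall fun v s hs => ?_)
    (integrable_sq_norm_mul_exp_neg_mul_sq_norm (half_pos hb))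
    (.of_forall fun v s _ => ?_)).2
  · have hs : b / 2 ≤ s := by
      rw [Metric.mem_ball, Real.dist_eq, abs_lt] at hs; linarith
    rw [norm_neg, norm_mul, norm_of_nonneg (by positivity), norm_of_nonneg (by positivity)]
    gcongr
  · simpa [mul_comm] using ((hasDerivAt_id s).neg.mul_const (‖v‖ ^ 2)).exp

theorem integral_sq_norm_mul_exp_neg_mul_sq_norm {b : ℝ} (hb : 0 < b) :
    ∫ v : E, ‖v‖ ^ 2 * rexp (-b * ‖v‖ ^ 2)
      = finrank ℝ E / (2 * b) * (π / b) ^ (finrank ℝ E / 2 : ℝ) := by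
  set c : ℝ := finrank ℝ E / 2
  have hclosed : HasDerivAt (fun s : ℝ => (π * s⁻¹) ^ c)
      (π * -(b ^ 2)⁻¹ * c * (π * b⁻¹) ^ (c - 1)) b :=
    ((hasDerivAt_inv hb.ne').const_mul π).rpow_const (.inl (by positivity))
  have hint : (fun s : ℝ => ∫ v : E, rexp (-s * ‖v‖ ^ 2)) =ᶠ[nhds b] fun s => (π * s⁻¹) ^ c :=
    (eventually_gt_nhds hb).mono fun s hs => by
      dsimp only; rw [GaussianFourier.integral_rexp_neg_mul_sq_norm hs, div_eq_mul_inv]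
  have := (hint.hasDerivAt_iff.mpr hclosed).unique (hasDerivAt_integral_exp_neg_mul_sq_norm hb)
  rw [eq_neg_iff_add_eq_zero, add_comm, ← eq_neg_iff_add_eq_zero] at this
  rw [this, rpow_sub_one (by positivity)]
  field_simp
  ring

theorem integral_norm_mul_exp_neg_mul_sq_norm_le {b : ℝ} (hb : 0 < b) :
    ∫ v : E, ‖v‖ * rexp (-b * ‖v‖ ^ 2)
      ≤ √(finrank ℝ E / (2 * b)) * (π / b) ^ (finrank ℝ E / 2 : ℝ) := by
  set a := √(finrank ℝ E / (2 * b))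
  rcases (finrank ℝ E).eq_zero_or_pos with hn | hn
  · have : Subsingleton E := finrank_zero_iff.mp hn
    simp only [Subsingleton.elim _ (0 : E), norm_zero, zero_mul, integral_zero]
    positivity
  have ha : 0 < a := sqrt_pos.mpr (by positivity)
  have hM2 : ∫ v : E, ‖v‖ ^ 2 * rexp (-b * ‖v‖ ^ 2) = a ^ 2 * (π / b) ^ (finrank ℝ E / 2 : ℝ) := by
    rw [integral_sq_norm_mul_exp_neg_mul_sq_norm hb, sq_sqrt (by positivity)]
  -- AM-GM `x ≤ a/2 + x²/(2a)`, with `a²` the normalized second moment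
  have hamgm (v : E) : ‖v‖ * rexp (-b * ‖v‖ ^ 2)
      ≤ a / 2 * rexp (-b * ‖v‖ ^ 2) + (2 * a)⁻¹ * (‖v‖ ^ 2 * rexp (-b * ‖v‖ ^ 2)) := by
    rw [← mul_assoc, ← add_mul]
    gcongr
    rw [← sub_nonneg]
    have : a / 2 + (2 * a)⁻¹ * ‖v‖ ^ 2 - ‖v‖ = (‖v‖ - a) ^ 2 / (2 * a) := by field_simp; ring
    rw [this]; positivity
  have hint := (integrable_exp_neg_mul_sq_norm (E := E) hb).const_mul (a / 2)
  have hint₂ := (integrable_sq_norm_mul_exp_neg_mul_sq_norm (E := E) hb).const_mul (2 * a)⁻¹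
  calc ∫ v : E, ‖v‖ * rexp (-b * ‖v‖ ^ 2)
      ≤ ∫ v : E, (a / 2 * rexp (-b * ‖v‖ ^ 2) + (2 * a)⁻¹ * (‖v‖ ^ 2 * rexp (-b * ‖v‖ ^ 2))) :=
        integral_mono (integrable_norm_mul_exp_neg_mul_sq_norm hb) (hint.add hint₂) hamgm
    _ = a / 2 * (π / b) ^ (finrank ℝ E / 2 : ℝ)
          + (2 * a)⁻¹ * (a ^ 2 * (π / b) ^ (finrank ℝ E / 2 : ℝ)) := by
        rw [integral_add hint hint₂, integral_const_mul, integral_const_mul, hM2,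
          GaussianFourier.integral_rexp_neg_mul_sq_norm hb]
    _ = a * (π / b) ^ (finrank ℝ E / 2 : ℝ) := by field_simp; ring

end GaussianMoments

section GaussianRegularization

variable {E : Type*} [NormedAddCommGroup E] [InnerProductSpace ℝ E] [FiniteDimensional ℝ E]
  [MeasurableSpace E] [BorelSpace E]

/-- The paper's `e^{ħΔ/4} g`. -/
def gaussianReg (ħ : ℝ) (g : E → ℝ) (z : E) : ℝ :=
  (π * ħ) ^ (-(finrank ℝ E / 2 : ℝ)) * ∫ z', rexp (-‖z - z'‖ ^ 2 / ħ) * g z'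

lemma rpow_neg_mul_integral_exp_neg_mul_sq_norm {ħ : ℝ} (hħ : 0 < ħ) :
    (π * ħ) ^ (-(finrank ℝ E / 2 : ℝ)) * ∫ u : E, rexp (-ħ⁻¹ * ‖u‖ ^ 2) = 1 := by
  rw [GaussianFourier.integral_rexp_neg_mul_sq_norm (inv_pos.mpr hħ), div_inv_eq_mul,
    rpow_neg (by positivity), inv_mul_cancel₀ (by positivity)]

lemma LipschitzWith.integrable_exp_neg_mul_sq_norm_mul {K : ℝ≥0} {g : E → ℝ}
    (hg : LipschitzWith K g) {b : ℝ} (hb : 0 < b) (z : E) :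
    Integrable (fun u : E => rexp (-b * ‖u‖ ^ 2) * g (z + u)) := by
  refine (((integrable_exp_neg_mul_sq_norm hb).const_mul |g z|).add
    ((integrable_norm_mul_exp_neg_mul_sq_norm hb).const_mul K)).mono'
    (by have := hg.continuous; fun_prop) (.of_forall fun u => ?_)
  have hgu : |g (z + u)| ≤ |g z| + K * ‖u‖ := by
    have := hg.dist_le_mul (z + u) z
    rw [Real.dist_eq, dist_eq_norm, add_sub_cancel_left] at this
    linarith [abs_sub_abs_le_abs_sub (g (z + u)) (g z)]
  rw [Pi.add_apply, norm_mul, norm_of_nonneg (exp_pos _).le, Real.norm_eq_abs]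
  calc rexp (-b * ‖u‖ ^ 2) * |g (z + u)| ≤ rexp (-b * ‖u‖ ^ 2) * (|g z| + K * ‖u‖) := by
        gcongr
    _ = _ := by ring

lemma gaussianReg_sub_self {ħ : ℝ} (hħ : 0 < ħ) {K : ℝ≥0} {g : E → ℝ} (hg : LipschitzWith K g)
    (z : E) :
    gaussianReg ħ g z - g z = (π * ħ) ^ (-(finrank ℝ E / 2 : ℝ)) *
      ∫ u, rexp (-ħ⁻¹ * ‖u‖ ^ 2) * (g (z + u) - g z) := by
  have hshift : ∫ z', rexp (-‖z - z'‖ ^ 2 / ħ) * g z'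
      = ∫ u, rexp (-ħ⁻¹ * ‖u‖ ^ 2) * g (z + u) := by
    rw [← integral_add_left_eq_self _ z]
    congr with u
    rw [sub_add_cancel_left, norm_neg, neg_div, div_eq_inv_mul, neg_mul]
  simp_rw [mul_sub]
  rw [integral_sub (hg.integrable_exp_neg_mul_sq_norm_mul (inv_pos.mpr hħ) z)
    ((integrable_exp_neg_mul_sq_norm (inv_pos.mpr hħ)).mul_const _), integral_mul_const,
    mul_sub, ← mul_assoc, rpow_neg_mul_integral_exp_neg_mul_sq_norm hħ, one_mul, gaussianReg,
    hshift]

theorem abs_gaussianReg_sub_le {ħ : ℝ} (hħ : 0 < ħ) {K : ℝ≥0} {g : E → ℝ}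
    (hg : LipschitzWith K g) (z : E) :
    |gaussianReg ħ g z - g z| ≤ K * √(finrank ℝ E * ħ / 2) := by
  have hb : 0 < ħ⁻¹ := inv_pos.mpr hħ
  have hlip (u : E) : ‖rexp (-ħ⁻¹ * ‖u‖ ^ 2) * (g (z + u) - g z)‖
      ≤ K * (‖u‖ * rexp (-ħ⁻¹ * ‖u‖ ^ 2)) := by
    have := hg.dist_le_mul (z + u) z
    rw [Real.dist_eq, dist_eq_norm, add_sub_cancel_left] at this
    rw [norm_mul, norm_of_nonneg (exp_pos _).le, Real.norm_eq_abs]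
    nlinarith [exp_pos (-ħ⁻¹ * ‖u‖ ^ 2)]
  have hfirst := integral_norm_mul_exp_neg_mul_sq_norm_le (E := E) hb
  rw [div_inv_eq_mul, ← div_eq_mul_inv, div_div_eq_mul_div] at hfirst
  rw [gaussianReg_sub_self hħ hg, abs_mul, abs_of_pos (by positivity), ← Real.norm_eq_abs]
  calc _ ≤ (π * ħ) ^ (-(finrank ℝ E / 2 : ℝ)) * (K * ∫ u : E, ‖u‖ * rexp (-ħ⁻¹ * ‖u‖ ^ 2)) := by
        gcongr
        rw [← integral_const_mul]
        exact norm_integral_le_of_norm_le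
          ((integrable_norm_mul_exp_neg_mul_sq_norm hb).const_mul _) (.of_forall hlip)
    _ ≤ (π * ħ) ^ (-(finrank ℝ E / 2 : ℝ)) *
          (K * (√(finrank ℝ E * ħ / 2) * (π * ħ) ^ (finrank ℝ E / 2 : ℝ))) := by
        gcongr
    _ = K * √(finrank ℝ E * ħ / 2) := by
        rw [rpow_neg (by positivity)]
        field_simp

end GaussianRegularization

lemma abs_integral_mul_le_of_abs_le {α : Type*} [MeasurableSpace α] {μ : Measure α}
    {φ w : α → ℝ} {C : ℝ} (hφ : ∀ x, |φ x| ≤ C) (hw : Integrable w μ) :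
    |∫ x, φ x * w x ∂μ| ≤ C * ∫ x, |w x| ∂μ := by
  rw [← integral_const_mul, ← Real.norm_eq_abs]
  refine norm_integral_le_of_norm_le (hw.abs.const_mul C) (.of_forall fun x => ?_)
  rw [norm_mul, Real.norm_eq_abs, Real.norm_eq_abs]
  exact mul_le_mul_of_nonneg_right (hφ x) (abs_nonneg _)

section FlowLipschitz

variable {E : Type*} [NormedAddCommGroup E] [NormedSpace ℝ E] {F : E → E} {K : ℝ≥0}
  {Φ : ℝ → E → E}

lemma dist_flow_le_of_nonneg (hF : LipschitzWith K F) (hΦ₀ : ∀ z, Φ 0 z = z)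
    (hΦ : ∀ z t, HasDerivAt (fun s => Φ s z) (F (Φ t z)) t) {t : ℝ} (ht : 0 ≤ t) (z z' : E) :
    dist (Φ t z) (Φ t z') ≤ rexp (K * t) * dist z z' := by
  have := dist_le_of_trajectories_ODE (v := fun _ => F) (fun _ => hF)
    (f := fun s => Φ s z) (g := fun s => Φ s z') (a := 0) (b := t)
    (fun s _ => (hΦ z s).continuousAt.continuousWithinAt) (fun s _ => (hΦ z s).hasDerivWithinAt)
    (fun s _ => (hΦ z' s).continuousAt.continuousWithinAt) (fun s _ => (hΦ z' s).hasDerivWithinAt)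
    (le_of_eq (by rw [hΦ₀, hΦ₀])) t ⟨ht, le_rfl⟩
  simpa [mul_comm] using this

theorem dist_flow_le (hF : LipschitzWith K F) (hΦ₀ : ∀ z, Φ 0 z = z)
    (hΦ : ∀ z t, HasDerivAt (fun s => Φ s z) (F (Φ t z)) t) (t : ℝ) (z z' : E) :
    dist (Φ t z) (Φ t z') ≤ rexp (K * |t|) * dist z z' := by
  rcases le_total 0 t with ht | ht
  · rw [abs_of_nonneg ht]
    exact dist_flow_le_of_nonneg hF hΦ₀ hΦ ht z z'
  have hF' : LipschitzWith K (-F) := .of_dist_le_mul fun x y => by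
    simpa only [Pi.neg_apply, dist_neg_neg] using hF.dist_le_mul x y
  have hΦ' (z : E) (s : ℝ) : HasDerivAt (fun r => Φ (-r) z) ((-F) (Φ (-s) z)) s := by
    simpa [Function.comp_def] using (hΦ z (-s)).scomp s (hasDerivAt_neg s)
  rw [abs_of_nonpos ht]
  simpa using dist_flow_le_of_nonneg hF' (Φ := fun s => Φ (-s)) (by simpa using hΦ₀) hΦ'
    (neg_nonneg.mpr ht) z z'

end FlowLipschitz

/-- The vector field of the Hamiltonian `|p|²/2 + V(q)`. -/
def hamiltonianField {d : ℕ} (V : EuclideanSpace ℝ (Fin d) → ℝ) (z : PhaseSpace d) :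
    PhaseSpace d :=
  mkPhase (momPart z) (-gradient V (posPart z))

lemma lipschitzWith_hamiltonianField {d : ℕ} {V : EuclideanSpace ℝ (Fin d) → ℝ} {L : ℝ≥0}
    (hV : LipschitzWith L (gradient V)) : LipschitzWith (max 1 L) (hamiltonianField V) := by
  refine .of_dist_le_mul fun z z' => ?_
  set q := posPart z - posPart z'
  set p := momPart z - momPart z'
  have hgrad := hV.dist_le_mul (posPart z) (posPart z')
  rw [dist_eq_norm, dist_eq_norm] at hgrad
  have hz : ‖z - z'‖ ^ 2 = ‖q‖ ^ 2 + ‖p‖ ^ 2 := WithLp.prod_norm_sq_eq_of_L2 (z - z')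
  have hF : ‖hamiltonianField V z - hamiltonianField V z'‖ ^ 2
      = ‖p‖ ^ 2 + ‖gradient V (posPart z) - gradient V (posPart z')‖ ^ 2 := by
    have hsnd : (hamiltonianField V z - hamiltonianField V z').snd
        = -(gradient V (posPart z) - gradient V (posPart z')) := by
      change -gradient V (posPart z) - -gradient V (posPart z') = _
      abel
    rw [WithLp.prod_norm_sq_eq_of_L2, hsnd, norm_neg]
    rfl
  rw [dist_eq_norm, dist_eq_norm]
  refine le_of_pow_le_pow_left₀ two_ne_zero (by positivity) ?_
  have h1 : (1 : ℝ) ≤ max 1 L := by exact_mod_cast le_max_left 1 L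
  have hL : (L : ℝ) ≤ max 1 L := by exact_mod_cast le_max_right 1 L
  rw [hF, mul_pow, hz]
  nlinarith [pow_le_pow_left₀ (norm_nonneg _) hgrad 2, mul_pow (L : ℝ) ‖q‖ 2,
    pow_le_pow_left₀ L.coe_nonneg hL 2, pow_le_pow_left₀ zero_le_one h1 2,
    sq_nonneg ‖q‖, sq_nonneg ‖p‖]

lemma finrank_phaseSpace (d : ℕ) : finrank ℝ (PhaseSpace d) = 2 * d := by
  rw [(WithLp.linearEquiv 2 ℝ _).finrank_eq, finrank_prod, finrank_euclideanSpace_fin, two_mul]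

theorem gaussian_reg_flow_pairing_bound
    (d : ℕ)
    (V : EuclideanSpace ℝ (Fin d) → ℝ)
    (L : ℝ≥0)
    (hgradLip : LipschitzWith L (gradient V))
    (Φ : ℝ → PhaseSpace d → PhaseSpace d)
    (hΦ₀ : ∀ z, Φ 0 z = z)
    (hΦ : ∀ z t, HasDerivAt (fun s => Φ s z)
      (mkPhase (momPart (Φ t z)) (-gradient V (posPart (Φ t z)))) t)
    (hbar : ℝ) (hhbar : 0 < hbar)
    (f : PhaseSpace d → ℝ) (hf : LipschitzWith 1 f)
    (w : PhaseSpace d → ℝ)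
    (hw : Integrable w (volume : Measure (PhaseSpace d))) :
    ∀ t : ℝ,
      |∫ z : PhaseSpace d,
          ((Real.pi * hbar) ^ (-(d : ℝ)) *
              (∫ z' : PhaseSpace d, Real.exp (-‖z - z'‖ ^ 2 / hbar) * f (Φ t z'))
            - f (Φ t z)) * w z|
        ≤ Real.sqrt ((d : ℝ) * hbar) * Real.exp ((1 + (L : ℝ)) * |t|) *
            ∫ z : PhaseSpace d, |w z| := by
  intro t
  let K : ℝ≥0 := ⟨rexp ((1 + L) * |t|), (exp_pos _).le⟩
  have hfield : LipschitzWith (1 + L) (hamiltonianField V) :=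
    (lipschitzWith_hamiltonianField hgradLip).weaken (max_le le_self_add le_add_self)
  have hflow : LipschitzWith K (Φ t) :=
    .of_dist_le_mul fun z z' => dist_flow_le hfield hΦ₀ hΦ t z z'
  have hreg (z : PhaseSpace d) := abs_gaussianReg_sub_le hhbar (by simpa using hf.comp hflow) z
  have hdim : ((finrank ℝ (PhaseSpace d) : ℕ) : ℝ) / 2 = d := by
    rw [finrank_phaseSpace]; push_cast; ring
  simp only [gaussianReg, hdim, mul_div_right_comm _ hbar, Function.comp_apply] at hreg
  exact abs_integral_mul_le_of_abs_le (fun z => (hreg z).trans_eq (mul_comm _ _)) hw
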